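/- Samples of the zero-mean sequence generated by f₄ are uncorrelated: the centered autocorrelation satisfies C̃₄(m) := ∫₀¹ (x − 1/2)·(f₄^m(x) − 1/2) · (1/π)·(x(1−x))^(−1/2) dx = (1/8)·δ_{m,0} for every natural number m; in particular C̃₄(m) = 0 for all m ≥ 1. -/

import Mathlib

open MeasureTheory Real

/-- The logistic map `f₄`. -/
noncomputable def f4 (x : ℝ) : ℝ := 4 * x * (1 - x)

/-- Invariant density of the ergodic logistic map `f₄`. -/
noncomputable def rho4 (x : ℝ) : ℝ := (1 / Real.pi) * (x * (1 - x)) ^ (-(1:ℝ)/2)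

/-!
Substituting `x = (1 - cos θ) / 2` conjugates `f₄` to the doubling map `θ ↦ 2θ` on `(0, π)` and
turns `ρ₄(x) dx` into `dθ / π`. The centered correlation becomes
`(4π)⁻¹ ∫₀^π cos θ · cos (2^m θ) dθ`, which by orthogonality of the cosines is `1/8` if `2^m = 1`
and `0` otherwise.
-/

open Set

lemma f4_one_sub_cos_div_two (θ : ℝ) : f4 ((1 - cos θ) / 2) = (1 - cos (2 * θ)) / 2 := by
  rw [f4, cos_two_mul]; ring

lemma f4_iterate_one_sub_cos_div_two (m : ℕ) (θ : ℝ) :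
    f4^[m] ((1 - cos θ) / 2) = (1 - cos (2 ^ m * θ)) / 2 := by
  induction m with
  | zero => simp
  | succ m ih => rw [Function.iterate_succ_apply', ih, f4_one_sub_cos_div_two, pow_succ', mul_assoc]

lemma image_one_sub_cos_div_two_Ioo : (fun θ => (1 - cos θ) / 2) '' Ioo 0 π = Ioo 0 1 := by
  ext x
  constructor
  · rintro ⟨θ, hθ, rfl⟩
    obtain ⟨h₁, h₂⟩ := mapsTo_cos_Ioo hθ
    constructor <;> linarith
  · rintro ⟨h₀, h₁⟩
    refine ⟨arccos (1 - 2 * x), ⟨arccos_pos.2 (by linarith), arccos_lt_pi.2 (by linarith)⟩, ?_⟩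
    dsimp only
    rw [cos_arccos (by linarith) (by linarith)]
    ring

lemma rho4_one_sub_cos_div_two {θ : ℝ} (hθ : 0 < sin θ) :
    rho4 ((1 - cos θ) / 2) = 2 / (π * sin θ) := by
  have hsin : 0 < sin θ / 2 := half_pos hθ
  have hsq : (1 - cos θ) / 2 * (1 - (1 - cos θ) / 2) = (sin θ / 2) ^ 2 := by
    nlinarith [sin_sq_add_cos_sq θ]
  rw [rho4, hsq, ← rpow_natCast, ← rpow_mul hsin.le]
  norm_num [rpow_neg_one]
  field_simp

lemma integral_mul_rho4 (g : ℝ → ℝ) :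
    ∫ x in (0:ℝ)..1, g x * rho4 x = π⁻¹ * ∫ θ in (0:ℝ)..π, g ((1 - cos θ) / 2) := by
  have hderiv : ∀ θ ∈ Ioo 0 π,
      HasDerivWithinAt (fun θ => (1 - cos θ) / 2) (sin θ / 2) (Ioo 0 π) θ := fun θ _ => by
    simpa using (((hasDerivAt_cos θ).const_sub 1).div_const 2).hasDerivWithinAt
  have hinj : InjOn (fun θ => (1 - cos θ) / 2) (Ioo 0 π) := fun a ha b hb hab =>
    injOn_cos (Ioo_subset_Icc_self ha) (Ioo_subset_Icc_self hb) (by simp only at hab; linarith)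
  rw [intervalIntegral.integral_of_le zero_le_one, integral_Ioc_eq_integral_Ioo,
    ← image_one_sub_cos_div_two_Ioo,
    integral_image_eq_integral_abs_deriv_smul measurableSet_Ioo hderiv hinj,
    intervalIntegral.integral_of_le pi_pos.le, integral_Ioc_eq_integral_Ioo,
    ← integral_const_mul]
  refine setIntegral_congr_fun measurableSet_Ioo fun θ hθ => ?_
  have hsin : 0 < sin θ := sin_pos_of_pos_of_lt_pi hθ.1 hθ.2
  rw [smul_eq_mul, rho4_one_sub_cos_div_two hsin, abs_of_pos (half_pos hsin)]
  field_simp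

lemma integral_cos_int_mul (n : ℤ) : ∫ θ in (0:ℝ)..π, cos (n * θ) = if n = 0 then π else 0 := by
  split_ifs with hn
  · simp [hn]
  · rw [intervalIntegral.integral_comp_mul_left _ (by exact_mod_cast hn), integral_cos, mul_zero,
      sin_zero, sin_int_mul_pi]
    simp

lemma integral_cos_nat_mul_mul_cos_nat_mul (j : ℕ) {k : ℕ} (hk : k ≠ 0) :
    ∫ θ in (0:ℝ)..π, cos (j * θ) * cos (k * θ) = if j = k then π / 2 else 0 := by
  have hprod : ∀ θ : ℝ, cos (j * θ) * cos (k * θ)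
      = (cos (((j - k : ℤ) : ℝ) * θ) + cos (((j + k : ℤ) : ℝ) * θ)) / 2 := by
    intro θ
    push_cast
    rw [sub_mul, add_mul, cos_sub, cos_add]
    ring
  have hint : ∀ n : ℤ, IntervalIntegrable (fun θ => cos (n * θ)) volume 0 π := fun n =>
    (continuous_cos.comp (continuous_const.mul continuous_id)).intervalIntegrable _ _
  simp only [hprod, intervalIntegral.integral_div,
    intervalIntegral.integral_add (hint _) (hint _), integral_cos_int_mul]
  have hsum : (j + k : ℤ) ≠ 0 := by omega
  by_cases hjk : j = k <;> simp [hjk, hsum, hk, sub_eq_zero]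

theorem centered_autocorrelation_f4 :
    (∀ m : ℕ,
      (∫ x in (0:ℝ)..1, (x - 1/2) * (f4^[m] x - 1/2) * rho4 x)
        = 1/8 * (if m = 0 then 1 else 0)) ∧
    (∀ m : ℕ, 1 ≤ m →
      (∫ x in (0:ℝ)..1, (x - 1/2) * (f4^[m] x - 1/2) * rho4 x) = 0) := by
  have hcorr : ∀ m : ℕ,
      (∫ x in (0:ℝ)..1, (x - 1/2) * (f4^[m] x - 1/2) * rho4 x)
        = 1/8 * (if m = 0 then 1 else 0) := by
    intro m
    have hintegrand : ∀ θ : ℝ, ((1 - cos θ) / 2 - 1/2) * (f4^[m] ((1 - cos θ) / 2) - 1/2)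
        = cos ((1 : ℕ) * θ) * cos ((2 ^ m : ℕ) * θ) / 4 := by
      intro θ
      rw [f4_iterate_one_sub_cos_div_two, Nat.cast_one, one_mul, Nat.cast_pow, Nat.cast_ofNat]
      ring
    rw [integral_mul_rho4, funext hintegrand, intervalIntegral.integral_div,
      integral_cos_nat_mul_mul_cos_nat_mul 1 (pow_ne_zero m two_ne_zero)]
    rcases eq_or_ne m 0 with rfl | hm
    · simp [field]; norm_num
    · simp [(Nat.one_lt_two_pow hm).ne, hm]
  exact ⟨hcorr, fun m hm => by rw [hcorr m, if_neg (by omega), mul_zero]⟩
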